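/- arXiv:1703.02063 — 7 statements merged into one kernel-verified Lean document; each statement's English description precedes it below -/
import Mathlib

section
/- Let p be a prime, P a finite p-group, and k a field of characteristic p. If W is a k-linear representation of P such that the fixed subspace W^P is finite-dimensional over k, then W itself is finite-dimensional over k, and moreover dim_k W ≤ |P| · dim_k W^P. -/
section Defs

variable {k : Type*} [Field k] {G : Type*} [Group G] [TopologicalSpace G]
variable {V : Type*} [AddCommGroup V] [Module k V]

/-- A representation of a topological group is smooth if the stabilizer of every
vector is an open subset. -/
def IsSmoothRep (ρ : Representation k G V) : Prop :=
  ∀ v : V, IsOpen {g : G | ρ g v = v}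

/-- The subspace of vectors fixed by every element of a subset `S` of `G`. -/
def fixedBy (ρ : Representation k G V) (S : Set G) : Submodule k V where
  carrier := {v : V | ∀ g ∈ S, ρ g v = v}
  add_mem' := by intro a b ha hb g hg; simp [map_add, ha g hg, hb g hg]
  zero_mem' := by intro g hg; simp
  smul_mem' := by intro c a ha g hg; simp [ha g hg]

/-- A subspace is `G`-stable if it is preserved by the action. -/
def IsStableRep (ρ : Representation k G V) (W : Submodule k V) : Prop :=
  ∀ g : G, ∀ v ∈ W, ρ g v ∈ W

/-- A representation is irreducible if it is nonzero and its only `G`-stable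
subspaces are `⊥` and `⊤`. -/
def IsIrreducibleRep (ρ : Representation k G V) : Prop :=
  (∃ v : V, v ≠ 0) ∧ ∀ W : Submodule k V, IsStableRep ρ W → W = ⊥ ∨ W = ⊤

/-- A representation is admissible if it is smooth and its fixed vectors under every
open subgroup form a finite-dimensional space. -/
def IsAdmissibleRep (ρ : Representation k G V) : Prop :=
  IsSmoothRep ρ ∧
    ∀ J : Subgroup G, IsOpen (J : Set G) → FiniteDimensional k ↥(fixedBy ρ (J : Set G))

/-- A (profinite) topological group is pro-`p` if every open normal subgroup has
index a power of `p`. -/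
def IsProP (p : ℕ) (G : Type*) [Group G] [TopologicalSpace G] : Prop :=
  ∀ N : Subgroup G, N.Normal → IsOpen (N : Set G) → ∃ n : ℕ, N.index = p ^ n

end Defs

open Module

lemma ker_pow_findim {k W : Type*} [Field k] [AddCommGroup W] [Module k W]
    (f : Module.End k W) (hker : FiniteDimensional k (LinearMap.ker f)) (n : ℕ) :
    FiniteDimensional k (LinearMap.ker (f ^ n)) ∧
      Module.finrank k (LinearMap.ker (f ^ n)) ≤ n * Module.finrank k (LinearMap.ker f) := by
  induction n with
  | zero =>
    rw [pow_zero]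
    have h : LinearMap.ker (1 : Module.End k W) = ⊥ := LinearMap.ker_id
    rw [h]
    exact ⟨inferInstance, by simp⟩
  | succ n ih =>
    obtain ⟨ihfd, ihle⟩ := ih
    have hle : LinearMap.ker f ≤ LinearMap.ker (f ^ (n + 1)) := by
      intro x hx
      rw [LinearMap.mem_ker] at hx ⊢
      rw [pow_succ, Module.End.mul_apply, hx, map_zero]
    have hmap : ∀ x ∈ LinearMap.ker (f ^ (n + 1)), f x ∈ LinearMap.ker (f ^ n) := by
      intro x hx
      rw [LinearMap.mem_ker] at hx ⊢
      rw [← Module.End.mul_apply, ← pow_succ, hx]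
    set g := f.restrict hmap with hg
    have hkerg : LinearMap.ker g =
        (LinearMap.ker f).comap (LinearMap.ker (f ^ (n + 1))).subtype :=
      LinearMap.ker_restrict hmap
    let e := Submodule.comapSubtypeEquivOfLe hle
    have hkerfd : FiniteDimensional k (LinearMap.ker g) := by
      rw [hkerg]; exact e.symm.finiteDimensional
    have hrangefd : FiniteDimensional k (LinearMap.range g) := inferInstance
    have hfd : FiniteDimensional k (LinearMap.ker (f ^ (n + 1))) := by
      refine Module.rank_lt_aleph0_iff.mp ?_
      rw [← g.rank_range_add_rank_ker]
      exact Cardinal.add_lt_aleph0 (Module.rank_lt_aleph0 _ _) (Module.rank_lt_aleph0 _ _)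
    refine ⟨hfd, ?_⟩
    have hdim := g.finrank_range_add_finrank_ker
    have h1 : finrank k (LinearMap.ker g) = finrank k (LinearMap.ker f) := by
      rw [hkerg]; exact e.finrank_eq
    have h2 : finrank k (LinearMap.range g) ≤ finrank k (LinearMap.ker (f ^ n)) :=
      Submodule.finrank_le _
    calc finrank k (LinearMap.ker (f ^ (n + 1)))
        = finrank k (LinearMap.range g) + finrank k (LinearMap.ker g) := hdim.symm
      _ ≤ finrank k (LinearMap.ker (f ^ n)) + finrank k (LinearMap.ker f) := by
          rw [h1]; exact Nat.add_le_add_right h2 _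
      _ ≤ n * finrank k (LinearMap.ker f) + finrank k (LinearMap.ker f) :=
          Nat.add_le_add_right ihle _
      _ = (n + 1) * finrank k (LinearMap.ker f) := by ring

/-- The subgroup of elements fixing a given vector. -/
def stabSubgroup {k : Type*} [Field k] {G : Type*} [Group G]
    {V : Type*} [AddCommGroup V] [Module k V] (ρ : Representation k G V) (v : V) :
    Subgroup G where
  carrier := {g : G | ρ g v = v}
  one_mem' := by simp [map_one]
  mul_mem' := by
    intro a b ha hb
    simp only [Set.mem_setOf_eq] at *
    rw [map_mul, Module.End.mul_apply, hb, ha]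
  inv_mem' := by
    intro a ha
    simp only [Set.mem_setOf_eq] at *
    have h2 : ρ a⁻¹ (ρ a v) = v := by
      rw [← Module.End.mul_apply, ← map_mul, inv_mul_cancel, map_one, Module.End.one_apply]
    rw [ha] at h2
    exact h2

universe u v w

lemma aux_statement2 (p : ℕ) (hp : p.Prime) :
    ∀ (n : ℕ) (P : Type u) [Group P] [Finite P], Nat.card P = n → IsPGroup p P →
    ∀ (k : Type v) [Field k] [CharP k p] (W : Type w) [AddCommGroup W] [Module k W]
      (ρ : Representation k P W),
      FiniteDimensional k (fixedBy ρ (Set.univ : Set P)) →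
      FiniteDimensional k W ∧
        Module.finrank k W ≤ Nat.card P * Module.finrank k (fixedBy ρ (Set.univ : Set P)) := by
  intro n
  induction n using Nat.strong_induction_on with
  | _ n IH =>
  intro P _ _ hcard hP k _ _ W _ _ ρ hfix
  haveI : Fact p.Prime := ⟨hp⟩
  -- trivial module case
  rcases subsingleton_or_nontrivial W with hW | hW
  · refine ⟨Module.Finite.of_basis (Basis.empty W (ι := Fin 0)), ?_⟩
    simp [Module.finrank_zero_of_subsingleton]
  -- trivial group case
  rcases subsingleton_or_nontrivial P with hPtriv | hPnt
  · have htop : fixedBy ρ (Set.univ : Set P) = (⊤ : Submodule k W) := by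
      rw [eq_top_iff]
      intro v _ g _
      rw [Subsingleton.elim g 1, map_one, Module.End.one_apply]
    rw [htop] at hfix ⊢
    refine ⟨Submodule.topEquiv.finiteDimensional, ?_⟩
    have h1 : Nat.card P = 1 := Nat.card_unique
    rw [h1, one_mul, finrank_top]
  -- main case: pick a central element of order p
  have hZ : IsPGroup p (Subgroup.center P) := hP.to_subgroup _
  haveI : Nontrivial (Subgroup.center P) := hP.center_nontrivial
  obtain ⟨m, hm⟩ := IsPGroup.iff_card.mp hZ
  have hdvd : p ∣ Nat.card (Subgroup.center P) := by
    rcases m with _ | m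
    · rw [pow_zero] at hm
      exact absurd (Nat.card_eq_one_iff_unique.mp hm).1 (not_subsingleton _)
    · exact ⟨p ^ m, by rw [hm, pow_succ, mul_comm]⟩
  obtain ⟨z, hz⟩ := exists_prime_orderOf_dvd_card' p hdvd
  set g : P := (z : P) with hgdef
  have hgmem : g ∈ Subgroup.center P := z.2
  have hgord : orderOf g = p := by rw [Subgroup.orderOf_coe, hz]
  set N : Subgroup P := Subgroup.zpowers g with hNdef
  haveI hNnormal : N.Normal := by
    constructor
    intro x hx h
    have hxc : x ∈ Subgroup.center P := Subgroup.zpowers_le.mpr hgmem hx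
    have := (Subgroup.mem_center_iff.mp hxc h).symm
    rw [show h * x * h⁻¹ = x from by rw [← this]; group]
    exact hx
  set S : Submodule k W := fixedBy ρ (N : Set P) with hSdef
  -- S is P-stable
  have hstab : ∀ h : P, ∀ v ∈ S, ρ h v ∈ S := by
    intro h v hv x hx
    have hxc : x ∈ Subgroup.center P := Subgroup.zpowers_le.mpr hgmem hx
    have hcomm : h * x = x * h := Subgroup.mem_center_iff.mp hxc h
    calc ρ x (ρ h v) = ρ (x * h) v := by rw [map_mul, Module.End.mul_apply]
      _ = ρ (h * x) v := by rw [hcomm]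
      _ = ρ h (ρ x v) := by rw [map_mul, Module.End.mul_apply]
      _ = ρ h v := by rw [hv x hx]
  -- the restricted representation of P on S
  let σ : Representation k P S :=
    { toFun := fun h => (ρ h).restrict (fun v hv => hstab h v hv)
      map_one' := by
        ext v
        simp [LinearMap.restrict_apply, map_one]
      map_mul' := by
        intro a b
        ext v
        simp [LinearMap.restrict_apply, map_mul] }
  have hσ_apply : ∀ (h : P) (v : S), ((σ h v : S) : W) = ρ h (v : W) := fun h v => rfl
  -- N acts trivially on S, so σ factors through P ⧸ N
  have hNker : N ≤ σ.asGroupHom.ker := by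
    intro x hx
    rw [MonoidHom.mem_ker]
    apply Units.ext
    rw [Representation.asGroupHom_apply]
    ext v
    exact v.2 x hx
  let σ' : Representation k (P ⧸ N) S :=
    (Units.coeHom _).comp (QuotientGroup.lift N σ.asGroupHom hNker)
  have hσ'_apply : ∀ (h : P), σ' (h : P ⧸ N) = σ h := by
    intro h
    show ((σ.asGroupHom h : Module.End k S)) = σ h
    rw [Representation.asGroupHom_apply]
  -- fixed points of σ' correspond to fixed points of ρ
  have hmemS : ∀ v ∈ fixedBy ρ (Set.univ : Set P), v ∈ S := by
    intro v hv x _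
    exact hv x trivial
  let e : (fixedBy σ' (Set.univ : Set (P ⧸ N))) ≃ₗ[k] (fixedBy ρ (Set.univ : Set P)) :=
    { toFun := fun x => ⟨(x.1 : W), by
        intro h _
        have hx := x.2 (h : P ⧸ N) trivial
        rw [hσ'_apply] at hx
        have := congrArg Subtype.val hx
        exact this⟩
      invFun := fun v => ⟨⟨v.1, hmemS v.1 v.2⟩, by
        intro q _
        obtain ⟨h, rfl⟩ := QuotientGroup.mk_surjective q
        rw [hσ'_apply]
        apply Subtype.ext
        exact v.2 h trivial⟩
      map_add' := fun _ _ => rfl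
      map_smul' := fun _ _ => rfl
      left_inv := fun x => by apply Subtype.ext; apply Subtype.ext; rfl
      right_inv := fun v => by apply Subtype.ext; rfl }
  have hfix' : FiniteDimensional k (fixedBy σ' (Set.univ : Set (P ⧸ N))) :=
    e.symm.finiteDimensional
  -- cardinalities
  have hcardN : Nat.card N = p := by rw [hNdef, Nat.card_zpowers, hgord]
  have hcardP : Nat.card P = Nat.card (P ⧸ N) * p := by
    rw [← hcardN]
    exact Subgroup.card_eq_card_quotient_mul_card_subgroup N
  have hppos : 0 < p := hp.pos
  have hQlt : Nat.card (P ⧸ N) < n := by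
    rw [← hcard, hcardP]
    have h1 : 0 < Nat.card (P ⧸ N) := Nat.card_pos
    exact (Nat.lt_mul_iff_one_lt_right h1).mpr hp.one_lt
  -- apply induction hypothesis to P ⧸ N acting on S
  obtain ⟨hSfd, hSle⟩ := IH (Nat.card (P ⧸ N)) hQlt (P ⧸ N) rfl (hP.to_quotient N)
    k S σ' hfix'
  rw [e.finrank_eq] at hSle
  -- the nilpotent operator
  haveI : Nontrivial (Module.End k W) := by
    obtain ⟨w, hw⟩ := exists_ne (0 : W)
    exact ⟨1, 0, fun h => hw (by simpa using congrArg (fun φ => φ w) h)⟩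
  haveI : CharP (Module.End k W) p :=
    charP_of_injective_algebraMap (algebraMap k (Module.End k W)).injective p
  set f : Module.End k W := ρ g - 1 with hfdef
  have hfp : f ^ p = 0 := by
    rw [hfdef, sub_pow_char_of_commute p (Commute.one_right _), one_pow,
      ← map_pow, ← hgord, pow_orderOf_eq_one, map_one, sub_self]
  have hkerf : LinearMap.ker f = S := by
    ext v
    rw [LinearMap.mem_ker, hfdef, LinearMap.sub_apply, Module.End.one_apply, sub_eq_zero]
    constructor
    · intro hv x hx
      exact Subgroup.zpowers_le.mpr (show g ∈ stabSubgroup ρ v from hv) hx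
    · intro hv
      exact hv g (Subgroup.mem_zpowers g)
  have hkerffd : FiniteDimensional k (LinearMap.ker f) := by rw [hkerf]; exact hSfd
  obtain ⟨hWfd', hWle⟩ := ker_pow_findim f hkerffd p
  have hkertop : LinearMap.ker (f ^ p) = ⊤ := by rw [hfp]; exact LinearMap.ker_zero
  rw [hkertop] at hWfd' hWle
  refine ⟨Submodule.topEquiv.finiteDimensional, ?_⟩
  rw [← finrank_top k W]
  calc finrank k (⊤ : Submodule k W) ≤ p * finrank k (LinearMap.ker f) := hWle
    _ = p * finrank k S := by rw [hkerf]
    _ ≤ p * (Nat.card (P ⧸ N) * finrank k (fixedBy ρ (Set.univ : Set P))) :=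
        Nat.mul_le_mul_left _ hSle
    _ = Nat.card P * finrank k (fixedBy ρ (Set.univ : Set P)) := by rw [hcardP]; ring
/-- for a finite `p`-group `P` and a representation `W` in
characteristic `p`, if `W^P` is finite-dimensional then so is `W`, and
`dim W ≤ |P| · dim W^P`. -/
theorem statement2 (p : ℕ) (hp : p.Prime)
    {P : Type*} [Group P] [Finite P] (hP : IsPGroup p P)
    {k : Type*} [Field k] [CharP k p]
    {W : Type*} [AddCommGroup W] [Module k W]
    (ρ : Representation k P W)
    (hfix : FiniteDimensional k ↥(fixedBy ρ (Set.univ : Set P))) :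
    FiniteDimensional k W ∧
      Module.finrank k W ≤ Nat.card P * Module.finrank k ↥(fixedBy ρ (Set.univ : Set P)) := by
  exact aux_statement2 p hp (Nat.card P) P rfl hP k W ρ hfix
end

section
/- Let p be a prime, k a field of characteristic p, G a topological group, and I an open subgroup of G which, with the subspace topology, is a pro-p profinite group. Let V be a smooth representation of G over k. If the fixed subspace V^I is finite-dimensional over k, then V is admissible, i.e., for every open subgroup J of G the fixed subspace V^J is finite-dimensional over k. -/
/-!
Shrink an open subgroup `J` to an open normal subgroup `N` of the compact group `I`; then `I ⧸ N`
is a finite `p`-group, so `N` sits at the bottom of a chain of normal subgroups of `I`, each of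
index `p` in the next. If `N ⊔ ⟨g⟩` is one step of such a chain, then `g` acts on `V^N` and
`ρ g - 1` is nilpotent there, since `(ρ g - 1) ^ p = ρ (g ^ p) - 1` in characteristic `p`;
its kernel on `V^N` is `V^(N ⊔ ⟨g⟩)`, so finite-dimensionality descends along the chain from
`V^I` to `V^N ⊇ V^J`.
-/

open Subgroup

theorem Submodule.finiteDimensional_of_map_of_inf_ker {k V W : Type*} [Field k]
    [AddCommGroup V] [Module k V] [AddCommGroup W] [Module k W] (f : V →ₗ[k] W)
    {P : Submodule k V} [FiniteDimensional k (P.map f)]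
    [FiniteDimensional k ↥(P ⊓ LinearMap.ker f)] : FiniteDimensional k P := by
  rw [← Submodule.fg_iff_finiteDimensional]
  exact Submodule.fg_of_fg_map_of_fg_inf_ker f ((Submodule.fg_iff_finiteDimensional _).2 ‹_›)
    ((Submodule.fg_iff_finiteDimensional _).2 ‹_›)

theorem Submodule.finiteDimensional_of_inf_ker_of_pow_apply_eq_zero {k V : Type*} [Field k]
    [AddCommGroup V] [Module k V] (f : Module.End k V) {U : Submodule k V}
    (hU : ∀ u ∈ U, f u ∈ U) {m : ℕ} (hm : ∀ u ∈ U, (f ^ m) u = 0)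
    [FiniteDimensional k ↥(U ⊓ LinearMap.ker f)] : FiniteDimensional k U := by
  have key (i : ℕ) : FiniteDimensional k ↥(U ⊓ LinearMap.ker (f ^ i)) := by
    induction i with
    | zero =>
      rw [pow_zero, Module.End.one_eq_id, LinearMap.ker_id, inf_bot_eq]
      infer_instance
    | succ i ih =>
      have hmap : (U ⊓ LinearMap.ker (f ^ (i + 1))).map f ≤ U ⊓ LinearMap.ker (f ^ i) := by
        rintro _ ⟨u, ⟨hu, hfu⟩, rfl⟩
        refine ⟨hU u hu, LinearMap.mem_ker.mpr ?_⟩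
        rw [← Module.End.mul_apply, ← pow_succ]
        exact hfu
      have : FiniteDimensional k ↥((U ⊓ LinearMap.ker (f ^ (i + 1))).map f) :=
        Submodule.finiteDimensional_of_le hmap
      have : FiniteDimensional k ↥(U ⊓ LinearMap.ker (f ^ (i + 1)) ⊓ LinearMap.ker f) :=
        Submodule.finiteDimensional_of_le (inf_le_inf_right _ inf_le_left)
      exact Submodule.finiteDimensional_of_map_of_inf_ker f
  have hUm : U ⊓ LinearMap.ker (f ^ m) = U := inf_eq_left.mpr hm
  exact hUm ▸ key m

namespace Subgroup

variable {H : Type*} [Group H]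

theorem normal_of_le_center {K : Subgroup H} (hK : K ≤ center H) : K.Normal where
  conj_mem n hn g := by
    rwa [mem_center_iff.mp (hK hn) g, mul_inv_cancel_right]

/-- `g` is a lift of a central element of order `p` of `H ⧸ N`, which exists because the
center of a nontrivial finite `p`-group is nontrivial. -/
theorem exists_pow_mem_normal_sup_zpowers_index_eq {p : ℕ} [hp : Fact p.Prime]
    {N : Subgroup H} [N.Normal] {n : ℕ} (hN : N.index = p ^ (n + 1)) :
    ∃ g : H, g ^ p ∈ N ∧ (N ⊔ zpowers g).Normal ∧ (N ⊔ zpowers g).index = p ^ n := by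
  have hcard : Nat.card (H ⧸ N) = p ^ (n + 1) := by rw [← index_eq_card, hN]
  have : Finite (H ⧸ N) := Nat.finite_of_card_ne_zero (by simp [hcard, hp.out.ne_zero])
  have hpQ : IsPGroup p (H ⧸ N) := IsPGroup.of_card hcard
  have : Nontrivial (H ⧸ N) := by
    rw [← Finite.one_lt_card_iff_nontrivial, hcard]
    exact Nat.one_lt_pow n.succ_ne_zero hp.out.one_lt
  have : Nontrivial (center (H ⧸ N)) := hpQ.center_nontrivial
  obtain ⟨⟨z, hz⟩, hzp⟩ := exists_prime_orderOf_dvd_card' (G := center (H ⧸ N)) p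
    ((hpQ.to_subgroup _).card_eq_or_dvd.resolve_left Finite.one_lt_card.ne')
  rw [orderOf_mk] at hzp
  obtain ⟨g, rfl⟩ := QuotientGroup.mk'_surjective N z
  have hM : N ⊔ zpowers g = (zpowers (QuotientGroup.mk' N g)).comap (QuotientGroup.mk' N) := by
    rw [← MonoidHom.map_zpowers, QuotientGroup.comap_map_mk']
  refine ⟨g, ?_, ?_, ?_⟩
  · rw [← QuotientGroup.eq_one_iff, ← QuotientGroup.mk'_apply, map_pow, ← hzp,
      pow_orderOf_eq_one]
  · rw [hM]
    exact (normal_of_le_center (zpowers_le.mpr hz)).comap _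
  · rw [hM, index_comap_of_surjective _ (QuotientGroup.mk'_surjective N)]
    have := card_mul_index (zpowers (QuotientGroup.mk' N g))
    rw [Nat.card_zpowers, hzp, ← index_eq_card, hN, pow_succ'] at this
    exact Nat.eq_of_mul_eq_mul_left hp.out.pos this

end Subgroup

namespace Representation

variable {k G V : Type*} [Field k] [Group G] [AddCommGroup V] [Module k V]
  (ρ : Representation k G V)

def stabilizer (v : V) : Subgroup G where
  carrier := {g | ρ g v = v}
  one_mem' := by simp
  mul_mem' {a b} ha hb := by simp_all [map_mul, Module.End.mul_apply]
  inv_mem' {a} (ha : ρ a v = v) :=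
    show ρ a⁻¹ v = v by simpa only [ha] using ρ.inv_self_apply a v

@[simp]
theorem mem_stabilizer {v : V} {g : G} : g ∈ ρ.stabilizer v ↔ ρ g v = v :=
  Iff.rfl

theorem mem_fixedBy_iff_le_stabilizer {K : Subgroup G} {v : V} :
    v ∈ fixedBy ρ K ↔ K ≤ ρ.stabilizer v :=
  Iff.rfl

theorem fixedBy_anti {S T : Set G} (hST : S ⊆ T) : fixedBy ρ T ≤ fixedBy ρ S :=
  fun _ hv g hg => hv g (hST hg)

theorem fixedBy_comp_subtype (K : Subgroup G) (S : Set K) :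
    fixedBy (ρ.comp K.subtype) S = fixedBy ρ (Subtype.val '' S) := by
  ext v
  simp [fixedBy]

theorem finiteDimensional_fixedBy_of_sup_zpowers {p : ℕ} [Fact p.Prime] [CharP k p]
    {N : Subgroup G} {g : G} (hg : g ∈ normalizer (N : Set G)) (hgp : g ^ p ∈ N)
    [FiniteDimensional k (fixedBy ρ (N ⊔ zpowers g : Subgroup G))] :
    FiniteDimensional k (fixedBy ρ N) := by
  rcases subsingleton_or_nontrivial V with hV | hV
  · infer_instance
  have : CharP (Module.End k V) p := charP_of_injective_algebraMap' k p
  set U := fixedBy ρ N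
  have hgU : ∀ u ∈ U, ρ g u ∈ U := fun u hu n hn => by
    rw [← Module.End.mul_apply, ← map_mul, ← mul_inv_cancel_left g n, mul_assoc, map_mul,
      Module.End.mul_apply, hu _ ((mem_normalizer_iff''.mp hg n).mp hn)]
  have hU : ∀ u ∈ U, (ρ g - 1) u ∈ U := fun u hu => U.sub_mem (hgU u hu) hu
  have hnil : ∀ u ∈ U, ((ρ g - 1) ^ p) u = 0 := fun u hu => by
    rw [sub_pow_char_of_commute p (Commute.one_right _), one_pow, ← map_pow,
      LinearMap.sub_apply, hu _ hgp, Module.End.one_apply, sub_self]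
  have hker : U ⊓ LinearMap.ker (ρ g - 1) ≤ fixedBy ρ (N ⊔ zpowers g : Subgroup G) := by
    rintro u ⟨hu, hgu⟩
    rw [mem_fixedBy_iff_le_stabilizer]
    refine sup_le hu (zpowers_le.mpr ?_)
    simpa [sub_eq_zero] using hgu
  have := Submodule.finiteDimensional_of_le hker
  exact Submodule.finiteDimensional_of_inf_ker_of_pow_apply_eq_zero _ hU hnil

theorem finiteDimensional_fixedBy_of_index_eq_pow {p : ℕ} [Fact p.Prime] [CharP k p]
    [FiniteDimensional k (fixedBy ρ Set.univ)] (N : Subgroup G) [N.Normal] {n : ℕ}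
    (hN : N.index = p ^ n) : FiniteDimensional k (fixedBy ρ N) := by
  induction n generalizing N with
  | zero =>
    rw [pow_zero, index_eq_one] at hN
    rwa [hN, coe_top]
  | succ n ih =>
    obtain ⟨g, hgp, hM, hMindex⟩ := exists_pow_mem_normal_sup_zpowers_index_eq hN
    have := ih _ hMindex
    exact ρ.finiteDimensional_fixedBy_of_sup_zpowers (by simp [normalizer_eq_top]) hgp

end Representation

theorem statement3_general (p : ℕ) (hp : p.Prime)
    {k : Type*} [Field k] [CharP k p]
    {G : Type*} [Group G] [TopologicalSpace G] [IsTopologicalGroup G]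
    (I : Subgroup G)
    [CompactSpace ↥I]
    (hpro : IsProP p ↥I)
    {V : Type*} [AddCommGroup V] [Module k V]
    (ρ : Representation k G V)
    (hfix : FiniteDimensional k ↥(fixedBy ρ (I : Set G))) :
    ∀ J : Subgroup G, IsOpen (J : Set G) → FiniteDimensional k ↥(fixedBy ρ (J : Set G)) := by
  intro J hJ
  have : Fact p.Prime := ⟨hp⟩
  let ρI := ρ.comp I.subtype
  have hfixI : fixedBy ρI Set.univ = fixedBy ρ I := by
    rw [ρ.fixedBy_comp_subtype, Set.image_univ, Subtype.range_coe]
  have : FiniteDimensional k (fixedBy ρI Set.univ) := hfixI ▸ hfix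
  have hJI : IsOpen (J.subgroupOf I : Set I) := I.subgroupOf_isOpen J hJ
  obtain ⟨N, hNJ⟩ := IsTopologicalGroup.exist_openNormalSubgroup_sub_clopen_nhds_of_one
    ⟨(J.subgroupOf I).isClosed_of_isOpen hJI, hJI⟩ (J.subgroupOf I).one_mem
  obtain ⟨n, hn⟩ := hpro N.toSubgroup N.isNormal' N.isOpen
  have := Representation.finiteDimensional_fixedBy_of_index_eq_pow ρI _ hn
  refine Submodule.finiteDimensional_of_le (S₂ := fixedBy ρI N) ?_
  rw [ρ.fixedBy_comp_subtype]
  exact ρ.fixedBy_anti (Set.image_subset_iff.mpr hNJ)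

/-- if a smooth representation has finite-dimensional fixed vectors under
one open pro-`p` profinite subgroup `I`, then it is admissible: the fixed vectors under
every open subgroup form a finite-dimensional subspace. -/
theorem statement3 (p : ℕ) (hp : p.Prime)
    {k : Type*} [Field k] [CharP k p]
    {G : Type*} [Group G] [TopologicalSpace G] [IsTopologicalGroup G]
    (I : Subgroup G) (hIopen : IsOpen (I : Set G))
    [CompactSpace ↥I] [T2Space ↥I] [TotallyDisconnectedSpace ↥I]
    (hpro : IsProP p ↥I)
    {V : Type*} [AddCommGroup V] [Module k V]
    (ρ : Representation k G V) (hsm : IsSmoothRep ρ)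
    (hfix : FiniteDimensional k ↥(fixedBy ρ (I : Set G))) :
    ∀ J : Subgroup G, IsOpen (J : Set G) → FiniteDimensional k ↥(fixedBy ρ (J : Set G)) :=
  statement3_general p hp I hpro ρ hfix
end

section
/- Let k be an algebraically closed field, G a group, and V an irreducible k-linear representation of G whose dimension over k, as a cardinal, is strictly less than the cardinality of k. Then every G-equivariant k-linear endomorphism of V is multiplication by a scalar in k. -/
universe u v

/-- Schur's lemma, cardinality version: if `V` is irreducible and
`dim_k V < #k` (as cardinals) over an algebraically closed field `k`, then every
`G`-equivariant `k`-linear endomorphism of `V` is a scalar. -/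
theorem statement4 {k : Type u} [Field k] [IsAlgClosed k]
    {G : Type*} [Group G]
    {V : Type u} [AddCommGroup V] [Module k V]
    (ρ : Representation k G V) (hirr : IsIrreducibleRep ρ)
    (hrank : Module.rank k V < Cardinal.mk k)
    (f : V →ₗ[k] V) (hf : ∀ (g : G) (v : V), f (ρ g v) = ρ g (f v)) :
    ∃ c : k, ∀ v : V, f v = c • v := by
  classical
  obtain ⟨⟨v₀, hv₀⟩, hstab⟩ := hirr
  -- every `aeval f p` is equivariant
  have hcomm : ∀ (p : Polynomial k) (g : G) (v : V),
      (Polynomial.aeval f p) (ρ g v) = ρ g ((Polynomial.aeval f p) v) := by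
    intro p
    induction p using Polynomial.induction_on' with
    | add p q hp hq => intro g v; simp [map_add, hp g v, hq g v]
    | monomial n a =>
        intro g v
        simp only [Polynomial.aeval_monomial, Module.algebraMap_end_apply,
          Module.End.mul_apply, LinearMap.smul_apply]
        rw [(ρ g).map_smul]
        congr 1
        induction n generalizing v with
        | zero => simp
        | succ n ih => simp only [pow_succ, Module.End.mul_apply, hf, ih]
  -- kernels of such maps are stable, hence trivial or everything
  have hker : ∀ p : Polynomial k, (Polynomial.aeval f p) v₀ = 0 →
      Polynomial.aeval f p = 0 := by
    intro p hp
    have hst : IsStableRep ρ (LinearMap.ker (Polynomial.aeval f p)) := by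
      intro g v hv
      simp only [LinearMap.mem_ker] at hv ⊢
      rw [hcomm, hv, map_zero]
    rcases hstab _ hst with h | h
    · exfalso
      exact hv₀ ((Submodule.eq_bot_iff _).mp h v₀ hp)
    · ext v
      exact (LinearMap.mem_ker).mp (h ▸ Submodule.mem_top : v ∈ LinearMap.ker _)
  by_cases hc : ∃ c : k, ∃ v : V, v ≠ 0 ∧ f v = c • v
  · -- eigenvector case: the eigenspace is stable and nonzero, hence everything
    obtain ⟨c, v, hv, hfv⟩ := hc
    refine ⟨c, fun w => ?_⟩
    have h0 : (Polynomial.aeval f (Polynomial.X - Polynomial.C c)) v₀ = 0 ∨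
        (Polynomial.aeval f (Polynomial.X - Polynomial.C c)) = 0 := by
      have hst : IsStableRep ρ
          (LinearMap.ker (Polynomial.aeval f (Polynomial.X - Polynomial.C c))) := by
        intro g u hu
        simp only [LinearMap.mem_ker] at hu ⊢
        rw [hcomm, hu, map_zero]
      rcases hstab _ hst with h | h
      · exfalso
        have : v ∈ LinearMap.ker (Polynomial.aeval f (Polynomial.X - Polynomial.C c)) := by
          simp [LinearMap.mem_ker, map_sub, Module.algebraMap_end_apply, hfv]
        exact hv ((Submodule.eq_bot_iff _).mp h v this)
      · right
        ext u
        exact (LinearMap.mem_ker).mp (h ▸ Submodule.mem_top : u ∈ LinearMap.ker _)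
    have hall : Polynomial.aeval f (Polynomial.X - Polynomial.C c) = 0 := by
      rcases h0 with h | h
      · exact hker _ h
      · exact h
    have := congrFun (congrArg (fun (g : V →ₗ[k] V) => g.toFun) hall) w
    simpa [map_sub, Module.algebraMap_end_apply, sub_eq_zero] using this
  · -- no eigenvector: every `f - c` is bijective; build resolvents
    exfalso
    push_neg at hc
    have hV : Nontrivial V := ⟨v₀, 0, hv₀⟩
    have hinj : ∀ c : k, Function.Injective
        (Polynomial.aeval f (Polynomial.X - Polynomial.C c)) := by
      intro c
      rw [← LinearMap.ker_eq_bot, Submodule.eq_bot_iff]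
      intro v hv
      by_contra hne
      refine hc c v hne ?_
      simpa [map_sub, Module.algebraMap_end_apply, sub_eq_zero] using
        (LinearMap.mem_ker.mp hv)
    -- `aeval f` is injective on polynomials
    have hCcase : ∀ p : Polynomial k, p.natDegree = 0 → Polynomial.aeval f p = 0 → p = 0 := by
      intro p h0 hp
      obtain ⟨a, rfl⟩ := Polynomial.natDegree_eq_zero.mp h0
      have : a • v₀ = 0 := by
        have := congrFun (congrArg (fun (g : V →ₗ[k] V) => g.toFun) hp) v₀
        simpa [Module.algebraMap_end_apply] using this
      rcases smul_eq_zero.mp this with h | h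
      · simp [h]
      · exact absurd h hv₀
    have haux : ∀ (n : ℕ) (p : Polynomial k), p.natDegree ≤ n →
        Polynomial.aeval f p = 0 → p = 0 := by
      intro n
      induction n with
      | zero => intro p hn hp; exact hCcase p (Nat.le_zero.mp hn) hp
      | succ n ih =>
        intro p hn hp
        by_cases h0 : p.natDegree = 0
        · exact hCcase p h0 hp
        · by_contra hp0
          have hdeg : p.degree ≠ 0 :=
            (Polynomial.natDegree_pos_iff_degree_pos.mp (Nat.pos_of_ne_zero h0)).ne'
          obtain ⟨r, hr⟩ := IsAlgClosed.exists_root p hdeg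
          obtain ⟨q, hq⟩ := Polynomial.dvd_iff_isRoot.mpr hr
          have hq0 : Polynomial.aeval f q = 0 := by
            ext v
            have hv : (Polynomial.aeval f (Polynomial.X - Polynomial.C r))
                ((Polynomial.aeval f q) v) = 0 := by
              have := congrFun (congrArg (fun (g : V →ₗ[k] V) => g.toFun) hp) v
              simpa [hq, map_mul, Module.End.mul_apply] using this
            have := hinj r (hv.trans (map_zero _).symm)
            simpa using this
          have hqne : q ≠ 0 := fun h => hp0 (by simp [hq, h])
          have hdq : q.natDegree ≤ n := by
            have : p.natDegree = q.natDegree + 1 := by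
              rw [hq, Polynomial.natDegree_mul (Polynomial.X_sub_C_ne_zero r) hqne,
                Polynomial.natDegree_X_sub_C]
              ring
            omega
          exact hqne (ih q hdq hq0)
    have htrans : ∀ p : Polynomial k, Polynomial.aeval f p = 0 → p = 0 :=
      fun p hp => haux p.natDegree p le_rfl hp
    -- surjectivity of each `f - c`
    have hsurj : ∀ c : k, Function.Surjective
        (Polynomial.aeval f (Polynomial.X - Polynomial.C c)) := by
      intro c
      have hst : IsStableRep ρ
          (LinearMap.range (Polynomial.aeval f (Polynomial.X - Polynomial.C c))) := by
        intro g v hv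
        obtain ⟨u, rfl⟩ := LinearMap.mem_range.mp hv
        exact LinearMap.mem_range.mpr ⟨ρ g u, hcomm _ g u⟩
      rcases hstab _ hst with h | h
      · exfalso
        have hne : Polynomial.aeval f (Polynomial.X - Polynomial.C c) ≠ 0 := by
          intro h0
          have := htrans _ h0
          exact Polynomial.X_sub_C_ne_zero c this
        obtain ⟨v, hv⟩ : ∃ v : V,
            (Polynomial.aeval f (Polynomial.X - Polynomial.C c)) v ≠ 0 := by
          by_contra hv
          push_neg at hv
          exact hne (LinearMap.ext fun v => by simpa using hv v)
        exact hv ((Submodule.eq_bot_iff _).mp h _ (LinearMap.mem_range_self _ v))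
      · intro v
        exact LinearMap.mem_range.mp (h ▸ Submodule.mem_top : v ∈ LinearMap.range _)
    -- resolvent family
    set w : k → V := fun c => Function.surjInv (hsurj c) v₀ with hw
    have hwc : ∀ c : k, (Polynomial.aeval f (Polynomial.X - Polynomial.C c)) (w c) = v₀ :=
      fun c => Function.surjInv_eq (hsurj c) v₀
    have hli : LinearIndependent k w := by
      rw [linearIndependent_iff']
      intro s m hm i hi
      -- multiply by ∏_{j∈s} (X - C j)
      set P : Polynomial k := ∑ j ∈ s, Polynomial.C (m j) *
        ∏ l ∈ s.erase j, (Polynomial.X - Polynomial.C l) with hP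
      have h1 : (Polynomial.aeval f P) v₀ = 0 := by
        have := congrArg (Polynomial.aeval f (∏ j ∈ s, (Polynomial.X - Polynomial.C j))) hm
        rw [map_zero, map_sum] at this
        rw [hP, map_sum, LinearMap.sum_apply]
        rw [← this]
        refine Finset.sum_congr rfl fun j hj => ?_
        rw [map_smul]
        rw [map_mul, Module.End.mul_apply]
        rw [← Finset.prod_erase_mul s _ hj, map_mul, Module.End.mul_apply, hwc j]
        simp [Module.algebraMap_end_apply]
      have hP0 : P = 0 := htrans _ (hker _ h1)
      have h2 := congrArg (Polynomial.eval i) hP0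
      rw [hP, Polynomial.eval_zero, Polynomial.eval_finset_sum] at h2
      have h3 : ∀ j ∈ s.erase i, Polynomial.eval i (Polynomial.C (m j) *
          ∏ l ∈ s.erase j, (Polynomial.X - Polynomial.C l)) = 0 := by
        intro j hj
        have hij : i ∈ s.erase j :=
          Finset.mem_erase_of_ne_of_mem (Finset.ne_of_mem_erase hj).symm hi
        rw [Polynomial.eval_mul, Polynomial.eval_prod]
        rw [← Finset.prod_erase_mul _ _ hij]
        simp
      rw [← Finset.sum_erase_add _ _ hi, Finset.sum_eq_zero h3, zero_add,
        Polynomial.eval_mul, Polynomial.eval_C, Polynomial.eval_prod] at h2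
      have h4 : (∏ l ∈ s.erase i, Polynomial.eval i (Polynomial.X - Polynomial.C l)) ≠ 0 := by
        refine Finset.prod_ne_zero_iff.mpr fun l hl => ?_
        simp only [Polynomial.eval_sub, Polynomial.eval_X, Polynomial.eval_C]
        exact sub_ne_zero.mpr (Finset.ne_of_mem_erase hl).symm
      exact (mul_eq_zero.mp h2).resolve_right h4
    exact absurd (hli.cardinal_le_rank) (not_le.mpr hrank)
end

section
/- Let k be an algebraically closed field and D a division ring equipped with a k-algebra structure, such that the dimension of D as a k-vector space, as a cardinal, is strictly less than the cardinality of k. Then the structure map k → D is surjective, i.e., D = k. -/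
/-!
The double centralizer of an element `d` of a division ring `D` is commutative (it centralizes
the centralizer of `d`, which contains itself) and closed under inverses, so it is a field
containing `d` and the image of `k`. If `d` were transcendental over `k`, the elements
`(d - c)⁻¹`, `c : k`, would be `k`-linearly independent inside it, forcing `#k ≤ dim_k D`.
Hence `D` is algebraic over `k`, and an algebraically closed field has no proper algebraic
extensions, even non-commutative ones.
-/

universe u v

open scoped IsMulCommutative

namespace Subalgebra

instance isMulCommutative_centralizer_centralizer_singleton {k A : Type*} [CommSemiring k]
    [Semiring A] [Algebra k A] (d : A) :
    IsMulCommutative (centralizer k (centralizer k {d} : Set A)) :=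
  .of_setLike_mul_comm fun _ h₁ _ h₂ ↦
    Set.centralizer_centralizer_comm_of_comm (S := {d}) (by simp) _ h₁ _ h₂

noncomputable instance fieldCentralizerCentralizerSingleton {k D : Type*} [Field k]
    [DivisionRing D] [Algebra k D] (d : D) :
    Field (centralizer k (centralizer k {d} : Set D)) :=
  Field.ofIsUnitOrEqZero fun a ↦ or_iff_not_imp_right.2 fun ha ↦ by
    have ha : (a : D) ≠ 0 := Subtype.coe_injective.ne ha
    exact ⟨⟨a, ⟨_, Set.inv_mem_centralizer₀ a.2⟩, Subtype.ext (mul_inv_cancel₀ ha),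
      Subtype.ext (inv_mul_cancel₀ ha)⟩, rfl⟩

end Subalgebra

theorem Transcendental.cardinal_lift_le_rank {k : Type u} {D : Type v} [Field k]
    [DivisionRing D] [Algebra k D] {d : D} (hd : Transcendental k d) :
    Cardinal.lift.{v} (Cardinal.mk k) ≤ Cardinal.lift.{u} (Module.rank k D) := by
  let C := Subalgebra.centralizer k (Subalgebra.centralizer k {d} : Set D)
  have hdC : d ∈ C := Set.subset_centralizer_centralizer rfl
  have hdC' : Transcendental k (⟨d, hdC⟩ : C) := fun h ↦ hd (h.algHom C.val)
  calc Cardinal.lift.{v} (Cardinal.mk k)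
      ≤ Cardinal.lift.{u} (Module.rank k C) :=
        hdC'.linearIndependent_sub_inv.cardinal_lift_le_rank
    _ ≤ Cardinal.lift.{u} (Module.rank k D) :=
      Cardinal.lift_le.2 (Submodule.rank_le (Subalgebra.toSubmodule C))

theorem Algebra.IsAlgebraic.of_rank_lt_cardinalMk {k : Type u} {D : Type v} [Field k]
    [DivisionRing D] [Algebra k D]
    (hrank : Cardinal.lift.{u} (Module.rank k D) < Cardinal.lift.{v} (Cardinal.mk k)) :
    Algebra.IsAlgebraic k D :=
  ⟨fun _ ↦ not_not.1 fun hd ↦ (Transcendental.cardinal_lift_le_rank hd).not_gt hrank⟩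

/-- if `D` is a division ring which is a `k`-algebra over an algebraically
closed field `k`, and `dim_k D < #k` as cardinals, then the structure map `k → D` is
surjective, i.e. `D = k`. -/
theorem statement5 {k : Type u} [Field k] [IsAlgClosed k]
    {D : Type u} [DivisionRing D] [Algebra k D]
    (hrank : Module.rank k D < Cardinal.mk k) :
    Function.Surjective (algebraMap k D) := by
  have : Algebra.IsAlgebraic k D := .of_rank_lt_cardinalMk (by simpa using hrank)
  exact IsAlgClosed.algebraMap_bijective_of_isIntegral.2
end

section
/- Let G be a topological group admitting a compact open subgroup K such that the set of left cosets of K in G is countable. Let k be an uncountable algebraically closed field and V an irreducible smooth representation of G over k. Then every G-equivariant k-linear endomorphism of V is multiplication by a scalar in k. -/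
/-! Dixmier's argument. As `K` is compact and stabilizers are open, every `K`-orbit in `V` is
finite, so every `G`-orbit is countable; an irreducible `V` is spanned by the orbit of any nonzero
vector and therefore has countable dimension. If `c - f` were invertible for every `c : k`, the
vectors `(c - f)⁻¹ v` would be linearly independent: multiplying a linear relation among them by
`∏ (c - f)` yields `q(f) v = 0` for a polynomial `q`, and `q(f)` is invertible unless `q = 0`
because `k` is algebraically closed. Since `k` is uncountable, some `c - f` is not invertible, and
by Schur's lemma it vanishes. -/

open Polynomial

universe u v

section Spectrum

variable {k : Type u} [Field k]

theorem Polynomial.eval_sum_smul_prod_erase_C_sub_X [DecidableEq k] (s : Finset k) (a : k → k)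
    {i : k} (hi : i ∈ s) :
    (∑ c ∈ s, a c • ∏ c' ∈ s.erase c, (C c' - X)).eval i =
      a i * ∏ c' ∈ s.erase i, (c' - i) := by
  rw [eval_finsetSum, Finset.sum_eq_single_of_mem i hi]
  · simp [eval_prod]
  · intro c hc hci
    have hic : i ∈ s.erase c := Finset.mem_erase.mpr ⟨hci.symm, hi⟩
    simp [eval_prod, Finset.prod_eq_zero hic]

variable [IsAlgClosed k]

theorem Polynomial.isUnit_aeval_of_spectrum_eq_empty {A : Type*} [Ring A] [Algebra k A] {a : A}
    (ha : spectrum k a = ∅) {p : k[X]} (hp : p ≠ 0) : IsUnit (aeval a p) := by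
  rcases le_or_gt p.degree 0 with hdeg | hdeg
  · rw [eq_C_of_degree_le_zero hdeg] at hp ⊢
    rw [aeval_C]
    exact (Ne.isUnit (C_ne_zero.mp hp)).map _
  · rw [← spectrum.zero_notMem_iff k, spectrum.map_polynomial_aeval_of_degree_pos a p hdeg, ha,
      Set.image_empty]
    exact Set.notMem_empty 0

variable {V : Type v} [AddCommGroup V] [Module k V]

namespace Module.End

theorem linearIndependent_resolvent_apply {f : Module.End k V}
    (hf : spectrum k f = ∅) {v : V} (hv : v ≠ 0) :
    LinearIndependent k fun c : k => resolvent f c v := by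
  classical
  rw [linearIndependent_iff']
  intro s a hsum i hi
  have hres : ∀ c ∈ s, aeval f (∏ c' ∈ s, (C c' - X)) * resolvent f c =
      aeval f (∏ c' ∈ s.erase c, (C c' - X)) := by
    intro c hc
    have hunit : IsUnit (algebraMap k (Module.End k V) c - f) := by
      simpa [hf] using (spectrum.notMem_iff (a := f) (r := c))
    rw [← Finset.prod_erase_mul _ _ hc, map_mul, mul_assoc, map_sub, aeval_C, aeval_X, resolvent,
      Ring.mul_inverse_cancel _ hunit, mul_one]
  set q : k[X] := ∑ c ∈ s, a c • ∏ c' ∈ s.erase c, (C c' - X)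
  have hqv : aeval f q v = 0 := by
    calc aeval f q v = ∑ c ∈ s, a c • aeval f (∏ c' ∈ s.erase c, (C c' - X)) v := by
          simp [q, LinearMap.sum_apply]
      _ = ∑ c ∈ s, a c • (aeval f (∏ c' ∈ s, (C c' - X)) * resolvent f c) v :=
          Finset.sum_congr rfl fun c hc => by rw [hres c hc]
      _ = aeval f (∏ c' ∈ s, (C c' - X)) (∑ c ∈ s, a c • resolvent f c v) := by
          simp [map_sum]
      _ = 0 := by rw [hsum, map_zero]
  have hq : q = 0 := by
    by_contra hq
    exact hv (((Module.End.isUnit_iff _).mp (isUnit_aeval_of_spectrum_eq_empty hf hq)).injective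
      (by rw [hqv, map_zero]))
  have := eval_sum_smul_prod_erase_C_sub_X s a hi
  change eval i q = _ at this
  rw [hq, eval_zero, eq_comm, mul_eq_zero] at this
  exact this.resolve_right <| Finset.prod_ne_zero_iff.mpr fun c hc =>
    sub_ne_zero.mpr (Finset.ne_of_mem_erase hc)

theorem spectrum_nonempty_of_rank_lt [Nontrivial V]
    (hV : Cardinal.lift.{u} (Module.rank k V) < Cardinal.lift.{v} (Cardinal.mk k))
    (f : Module.End k V) : (spectrum k f).Nonempty := by
  rw [Set.nonempty_iff_ne_empty]
  intro hf
  obtain ⟨v, hv⟩ := exists_ne (0 : V)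
  exact hV.not_ge (linearIndependent_resolvent_apply hf hv).cardinal_lift_le_rank

end Module.End

end Spectrum

namespace MulAction

open scoped Pointwise

variable {G X : Type*} [Group G] [TopologicalSpace G] [IsTopologicalGroup G] [MulAction G X]

theorem finite_orbit_of_compactSpace [CompactSpace G] {x : X}
    (hx : IsOpen (stabilizer G x : Set G)) : (orbit G x).Finite :=
  have := Subgroup.quotient_finite_of_isOpen _ hx
  Set.finite_coe_iff.mp (Finite.of_equiv _ (orbitEquivQuotientStabilizer G x).symm)

theorem countable_orbit_of_isCompact {K : Subgroup G} (hK : IsCompact (K : Set G))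
    [Countable (G ⧸ K)] {x : X} (hx : IsOpen (stabilizer G x : Set G)) :
    (orbit G x).Countable := by
  have : CompactSpace K := isCompact_iff_compactSpace.mp hK
  have hKx : (orbit K x).Finite :=
    finite_orbit_of_compactSpace (continuous_subtype_val.isOpen_preimage _ hx)
  have hcover : orbit G x ⊆ ⋃ q : G ⧸ K, (q.out : G) • orbit K x := by
    rintro _ ⟨g, rfl⟩
    obtain ⟨h, hh⟩ := QuotientGroup.mk_out_eq_mul K g
    refine Set.mem_iUnion.mpr ⟨g, h⁻¹ • x, mem_orbit x h⁻¹, ?_⟩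
    simp [hh, smul_smul, Subgroup.smul_def]
  exact (Set.countable_iUnion fun q => (hKx.smul_set).countable).mono hcover

end MulAction

section Representation

variable {k G V W : Type*} [Field k] [Group G]
  [AddCommGroup V] [Module k V] [AddCommGroup W] [Module k W]
  {ρ : Representation k G V} {σ : Representation k G W}

theorem IsSmoothRep.countable_range_apply [TopologicalSpace G] [IsTopologicalGroup G]
    (hρ : IsSmoothRep ρ) {K : Subgroup G} (hK : IsCompact (K : Set G)) [Countable (G ⧸ K)]
    (v : V) :
    (Set.range fun g => ρ g v).Countable :=
  letI : MulAction G V := MulAction.compHom V ρ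
  MulAction.countable_orbit_of_isCompact hK (hρ v)

theorem isStableRep_ker {T : V →ₗ[k] W} (hT : ∀ g v, T (ρ g v) = σ g (T v)) :
    IsStableRep ρ (LinearMap.ker T) := by
  intro g v hv
  rw [LinearMap.mem_ker] at hv ⊢
  rw [hT, hv, map_zero]

theorem isStableRep_range {T : V →ₗ[k] W} (hT : ∀ g v, T (ρ g v) = σ g (T v)) :
    IsStableRep σ (LinearMap.range T) := by
  rintro g _ ⟨v, rfl⟩
  exact ⟨ρ g v, hT g v⟩

theorem IsIrreducibleRep.eq_zero_or_bijective (hρ : IsIrreducibleRep ρ)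
    (hσ : IsIrreducibleRep σ) {T : V →ₗ[k] W} (hT : ∀ g v, T (ρ g v) = σ g (T v)) :
    T = 0 ∨ Function.Bijective T := by
  rcases hρ.2 _ (isStableRep_ker hT) with hker | hker
  · rcases hσ.2 _ (isStableRep_range hT) with hrange | hrange
    · exact Or.inl (LinearMap.range_eq_bot.mp hrange)
    · exact Or.inr ⟨LinearMap.ker_eq_bot.mp hker, LinearMap.range_eq_top.mp hrange⟩
  · exact Or.inl (LinearMap.ker_eq_top.mp hker)

theorem IsIrreducibleRep.span_range_apply_eq_top (hρ : IsIrreducibleRep ρ) {v : V}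
    (hv : v ≠ 0) :
    Submodule.span k (Set.range fun g => ρ g v) = ⊤ := by
  set S := Submodule.span k (Set.range fun g => ρ g v)
  have hstable : IsStableRep ρ S := by
    intro g w hw
    have hgS : Set.range (fun h => ρ h v) ⊆ S.comap (ρ g) := by
      rintro _ ⟨h, rfl⟩
      exact Submodule.subset_span ⟨g * h, by simp⟩
    exact Submodule.span_le.mpr hgS hw
  refine (hρ.2 S hstable).resolve_left fun hbot => hv ?_
  rw [← Submodule.mem_bot k, ← hbot]
  exact Submodule.subset_span ⟨1, by simp⟩

end Representation

theorem statement7_general {G : Type*} [Group G] [TopologicalSpace G] [IsTopologicalGroup G]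
    (K : Subgroup G) (hKc : IsCompact (K : Set G))
    (hcount : Countable (G ⧸ K))
    {k : Type*} [Field k] [IsAlgClosed k] [Uncountable k]
    {V : Type*} [AddCommGroup V] [Module k V]
    (ρ : Representation k G V) (hsm : IsSmoothRep ρ) (hirr : IsIrreducibleRep ρ)
    (f : V →ₗ[k] V) (hf : ∀ (g : G) (v : V), f (ρ g v) = ρ g (f v)) :
    ∃ c : k, ∀ v : V, f v = c • v := by
  obtain ⟨v, hv⟩ := hirr.1
  have : Nontrivial V := ⟨v, 0, hv⟩
  have hrank : Module.rank k V ≤ Cardinal.aleph0 := by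
    have := rank_span_le (R := k) (Set.range fun g => ρ g v)
    rw [hirr.span_range_apply_eq_top hv, rank_top] at this
    exact this.trans (hsm.countable_range_apply hKc v).le_aleph0
  obtain ⟨c, hc⟩ := Module.End.spectrum_nonempty_of_rank_lt
    ((Cardinal.lift_le_aleph0.mpr hrank).trans_lt
      (Cardinal.aleph0_lt_lift.mpr Cardinal.aleph0_lt_mk)) f
  have hT : ∀ g w, (algebraMap k (Module.End k V) c - f) (ρ g w) =
      ρ g ((algebraMap k (Module.End k V) c - f) w) := by
    simp [hf]
  rcases hirr.eq_zero_or_bijective hirr hT with hzero | hbij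
  · exact ⟨c, fun w => (sub_eq_zero.mp (by simpa using LinearMap.congr_fun hzero w)).symm⟩
  · exact absurd ((Module.End.isUnit_iff _).mpr hbij) hc

/-- if `G` has a compact open subgroup with countably many left cosets and
`k` is uncountable algebraically closed, then every `G`-equivariant endomorphism of an
irreducible smooth representation of `G` over `k` is a scalar. -/
theorem statement7 {G : Type*} [Group G] [TopologicalSpace G] [IsTopologicalGroup G]
    (K : Subgroup G) (hKc : IsCompact (K : Set G)) (hKo : IsOpen (K : Set G))
    (hcount : Countable (G ⧸ K))
    {k : Type*} [Field k] [IsAlgClosed k] [Uncountable k]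
    {V : Type*} [AddCommGroup V] [Module k V]
    (ρ : Representation k G V) (hsm : IsSmoothRep ρ) (hirr : IsIrreducibleRep ρ)
    (f : V →ₗ[k] V) (hf : ∀ (g : G) (v : V), f (ρ g v) = ρ g (f v)) :
    ∃ c : k, ∀ v : V, f v = c • v :=
  statement7_general K hKc hcount ρ hsm hirr f hf
end

section
/- Let G be a topological group, K a compact open subgroup of G, and Z a subgroup of the center of G such that the subgroup of G generated by Z and K has finite index in G. Let k be a field and V an irreducible smooth representation of G over k such that every element of Z acts on V by multiplication by a scalar in k. Then V is finite-dimensional over k. -/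
/-! Smoothness makes `g ↦ ρ g v` locally constant, so the compact group `K` moves `v` through
only finitely many vectors. As `Z` is central, `⟨Z, K⟩ = Z K`, and `Z` acts by scalars, so the
`⟨Z, K⟩`-orbit of `v` still spans a finitely generated subspace; finitely many coset
representatives of `⟨Z, K⟩` then carry it onto a finitely generated subspace containing the
whole `G`-orbit of `v`, which spans `V` by irreducibility once `v ≠ 0`. -/

open Topology

theorem Subgroup.normal_of_le_center_s10 {G : Type*} [Group G] {Z : Subgroup G}
    (hZ : Z ≤ Subgroup.center G) : Z.Normal where
  conj_mem z hz g := by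
    rwa [Subgroup.mem_center_iff.mp (hZ hz) g, mul_inv_cancel_right]

section OrbitSpan

variable {k G V : Type*} [Field k] [Group G] [AddCommGroup V] [Module k V]
  (ρ : Representation k G V)

def orbitSpan (S : Set G) (v : V) : Submodule k V :=
  Submodule.span k ((fun g => ρ g v) '' S)

theorem IsSmoothRep.isLocallyConstant_orbitMap [TopologicalSpace G] [ContinuousMul G]
    {ρ : Representation k G V} (hsm : IsSmoothRep ρ) (v : V) :
    IsLocallyConstant fun g => ρ g v := by
  refine (IsLocallyConstant.iff_eventually_eq _).mpr fun x => ?_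
  have hstab : {g : G | ρ g v = v} ∈ 𝓝 (1 : G) := (hsm v).mem_nhds (by simp)
  have hx : (fun g => x⁻¹ * g) ⁻¹' {g : G | ρ g v = v} ∈ 𝓝 x :=
    (continuous_const.mul continuous_id).continuousAt.preimage_mem_nhds (by simpa using hstab)
  filter_upwards [hx] with g hg
  simpa [← Module.End.mul_apply, ← map_mul] using congrArg (ρ x) hg

theorem IsSmoothRep.orbitSpan_fg_of_isCompact [TopologicalSpace G] [ContinuousMul G]
    {ρ : Representation k G V} (hsm : IsSmoothRep ρ) {K : Set G} (hK : IsCompact K) (v : V) :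
    (orbitSpan ρ K v).FG := by
  have : CompactSpace K := isCompact_iff_compactSpace.mp hK
  refine Submodule.fg_span ?_
  rw [Set.image_eq_range]
  exact ((hsm.isLocallyConstant_orbitMap v).comp_continuous continuous_subtype_val).range_finite

theorem orbitSpan_sup_le_of_le_center {Z K : Subgroup G} (hZ : Z ≤ Subgroup.center G)
    (hscalar : ∀ z ∈ Z, ∃ c : k, ∀ v : V, ρ z v = c • v) (v : V) :
    orbitSpan ρ (Z ⊔ K : Subgroup G) v ≤ orbitSpan ρ K v := by
  have := Subgroup.normal_of_le_center_s10 hZ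
  refine Submodule.span_le.mpr ?_
  rintro _ ⟨g, hg, rfl⟩
  rw [Subgroup.normal_mul] at hg
  obtain ⟨z, hz, x, hx, rfl⟩ := hg
  obtain ⟨c, hc⟩ := hscalar z hz
  show ρ (z * x) v ∈ _
  rw [map_mul, Module.End.mul_apply, hc]
  exact Submodule.smul_mem _ c (Submodule.subset_span ⟨x, hx, rfl⟩)

theorem orbitSpan_univ_le_iSup_map (H : Subgroup G) (v : V) :
    orbitSpan ρ Set.univ v ≤ ⨆ q : G ⧸ H, (orbitSpan ρ H v).map (ρ q.out) := by
  refine Submodule.span_le.mpr ?_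
  rintro _ ⟨g, -, rfl⟩
  set r := (g : G ⧸ H).out
  have hr : r⁻¹ * g ∈ H := by rw [← QuotientGroup.eq, QuotientGroup.out_eq']
  have hg : ρ g v = ρ r (ρ (r⁻¹ * g) v) := by
    rw [← Module.End.mul_apply, ← map_mul, mul_inv_cancel_left]
  show ρ g v ∈ _
  rw [hg]
  exact Submodule.mem_iSup_of_mem (g : G ⧸ H)
    (Submodule.mem_map_of_mem (Submodule.subset_span ⟨_, hr, rfl⟩))

theorem orbitSpan_univ_fg_of_finiteIndex (H : Subgroup G) [H.FiniteIndex] {v : V}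
    (hH : (orbitSpan ρ H v).FG) : (orbitSpan ρ Set.univ v).FG :=
  (Submodule.fg_iSup _ fun _ => hH.map _).of_le (orbitSpan_univ_le_iSup_map ρ H v)

theorem isStableRep_orbitSpan_univ (v : V) : IsStableRep ρ (orbitSpan ρ Set.univ v) := by
  intro g w hw
  have hmap : (orbitSpan ρ Set.univ v).map (ρ g) ≤ orbitSpan ρ Set.univ v := by
    rw [orbitSpan, Submodule.map_span, ← Set.image_comp]
    refine Submodule.span_mono ?_
    rintro _ ⟨h, -, rfl⟩
    exact ⟨g * h, trivial, by simp [map_mul]⟩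
  exact hmap (Submodule.mem_map_of_mem hw)

theorem IsIrreducibleRep.orbitSpan_univ_eq_top {ρ : Representation k G V}
    (hirr : IsIrreducibleRep ρ) {v : V} (hv : v ≠ 0) : orbitSpan ρ Set.univ v = ⊤ := by
  refine (hirr.2 _ (isStableRep_orbitSpan_univ ρ v)).resolve_left fun hbot => hv ?_
  have hmem : v ∈ orbitSpan ρ Set.univ v := Submodule.subset_span ⟨1, trivial, by simp⟩
  simpa [hbot] using hmem

end OrbitSpan

theorem statement10_general {G : Type*} [Group G] [TopologicalSpace G] [IsTopologicalGroup G]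
    (K : Subgroup G) (hKc : IsCompact (K : Set G))
    (Z : Subgroup G) (hZ : Z ≤ Subgroup.center G)
    (hindex : (Z ⊔ K).FiniteIndex)
    {k : Type*} [Field k]
    {V : Type*} [AddCommGroup V] [Module k V]
    (ρ : Representation k G V) (hsm : IsSmoothRep ρ) (hirr : IsIrreducibleRep ρ)
    (hscalar : ∀ z ∈ Z, ∃ c : k, ∀ v : V, ρ z v = c • v) :
    FiniteDimensional k V := by
  obtain ⟨v, hv⟩ := hirr.1
  have hKfg := hsm.orbitSpan_fg_of_isCompact hKc v
  have hZKfg := hKfg.of_le (orbitSpan_sup_le_of_le_center ρ hZ hscalar v)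
  refine Module.finite_def.mpr ?_
  rw [← hirr.orbitSpan_univ_eq_top hv]
  exact orbitSpan_univ_fg_of_finiteIndex ρ (Z ⊔ K) hZKfg

/-- if `G` has a compact open subgroup `K` and a central subgroup `Z` such
that `⟨Z, K⟩` has finite index in `G`, then any irreducible smooth representation of `G`
on which `Z` acts by scalars is finite-dimensional. -/
theorem statement10 {G : Type*} [Group G] [TopologicalSpace G] [IsTopologicalGroup G]
    (K : Subgroup G) (hKc : IsCompact (K : Set G)) (hKo : IsOpen (K : Set G))
    (Z : Subgroup G) (hZ : Z ≤ Subgroup.center G)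
    (hindex : (Z ⊔ K).FiniteIndex)
    {k : Type*} [Field k]
    {V : Type*} [AddCommGroup V] [Module k V]
    (ρ : Representation k G V) (hsm : IsSmoothRep ρ) (hirr : IsIrreducibleRep ρ)
    (hscalar : ∀ z ∈ Z, ∃ c : k, ∀ v : V, ρ z v = c • v) :
    FiniteDimensional k V :=
  statement10_general K hKc Z hZ hindex ρ hsm hirr hscalar
end

section
/- Let p be a prime, F = 𝔽_p((T)) the field of formal Laurent series over the field with p elements, endowed with its valuation topology, and let G = Fˣ be its unit group, a topological group. Let k be an algebraically closed field of characteristic p. Then there exist a smooth representation V of G over k which is admissible and a G-stable subspace W of V such that the quotient representation V/W is not admissible. -/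
/-- The representation induced on the quotient `V ⧸ W` by a stable subspace `W`. -/
def quotRep {k : Type*} [Field k] {G : Type*} [Group G]
    {V : Type*} [AddCommGroup V] [Module k V]
    (ρ : Representation k G V) (W : Submodule k V) (h : IsStableRep ρ W) :
    Representation k G (V ⧸ W) where
  toFun g := Submodule.mapQ W W (ρ g) (fun v hv => h g v hv)
  map_one' := by
    apply LinearMap.ext
    intro x
    obtain ⟨v, rfl⟩ := Submodule.Quotient.mk_surjective W x
    simp [Submodule.mapQ_apply]
  map_mul' := by
    intro g₁ g₂
    apply LinearMap.ext
    intro x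
    obtain ⟨v, rfl⟩ := Submodule.Quotient.mk_surjective W x
    simp [Submodule.mapQ_apply]

open Filter Topology PowerSeries

section LogDeriv

variable {R A : Type*} [CommRing R] [CommRing A] [Algebra R A]

def Derivation.logDerivHom (D : Derivation R A A) : Aˣ →* Multiplicative A where
  toFun u := Multiplicative.ofAdd (D u * ↑u⁻¹)
  map_one' := by simp
  map_mul' u v := by
    simp only [Units.val_mul, Derivation.leibniz, smul_eq_mul, mul_inv_rev]
    rw [← ofAdd_add]
    congr 1
    linear_combination (D v * ↑v⁻¹) * u.mul_inv + (D u * ↑u⁻¹) * v.mul_inv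

end LogDeriv

namespace PowerSeries

variable {R : Type*} [CommRing R]

lemma X_pow_dvd_derivative {n : ℕ} {f : R⟦X⟧} (h : X ^ (n + 1) ∣ f) : X ^ n ∣ derivative R f :=
  X_pow_dvd_iff.2 fun m hm ↦ by
    rw [coeff_derivative, X_pow_dvd_iff.1 h (m + 1) (by omega), zero_mul]

end PowerSeries

namespace LaurentSeries

section

variable {R : Type*} [CommRing R]

lemma order_ofPowerSeries_eq_zero {φ : R⟦X⟧} (h : constantCoeff φ ≠ 0) :
    (φ : R⸨X⸩).order = 0 := by
  have h0 : (φ : R⸨X⸩).coeff 0 ≠ 0 := by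
    simpa using (coeff_coe_powerSeries φ 0).trans_ne (by rwa [coeff_zero_eq_constantCoeff_apply])
  refine le_antisymm (HahnSeries.order_le_of_coeff_ne_zero h0) ?_
  rw [HahnSeries.le_order_iff_forall (fun h' ↦ h0 (by simp [h']))]
  intro i hi
  rw [HahnSeries.ofPowerSeries_apply, HahnSeries.embDomain_of_notMem_range]
  rintro ⟨n, rfl⟩
  exact (Int.natCast_nonneg n).not_gt hi

lemma powerSeriesPart_ofPowerSeries {φ : R⟦X⟧} (h : constantCoeff φ ≠ 0) :
    powerSeriesPart (φ : R⸨X⸩) = φ := by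
  ext n
  simp [order_ofPowerSeries_eq_zero h]

variable (R) [IsDomain R]

noncomputable def powerSeriesPartHom : R⸨X⸩ →* R⟦X⟧ where
  toFun := powerSeriesPart
  map_one' := by
    simpa using powerSeriesPart_ofPowerSeries (φ := (1 : R⟦X⟧)) (by simp)
  map_mul' x y := by
    rcases eq_or_ne x 0 with rfl | hx
    · simp
    rcases eq_or_ne y 0 with rfl | hy
    · simp
    refine HahnSeries.ofPowerSeries_injective (Γ := ℤ) ?_
    rw [map_mul, ofPowerSeries_powerSeriesPart, ofPowerSeries_powerSeriesPart,
      ofPowerSeries_powerSeriesPart, HahnSeries.order_mul hx hy, neg_add]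
    conv_lhs => rw [← mul_one (1 : R), ← HahnSeries.single_mul_single]
    ring

end

variable {K : Type*} [Field K]

lemma eventually_nhds_zero_exists_X_pow_dvd (D : ℕ) :
    ∀ᶠ f in 𝓝 (0 : K⸨X⸩), ∃ ψ : K⟦X⟧, X ^ D ∣ ψ ∧ (ψ : K⸨X⸩) = f := by
  let y : K⸨X⸩ := (X : K⟦X⟧) ^ D
  have hball : IsOpen {f : K⸨X⸩ | Valued.v f < Valued.v y} := by
    simpa only [Valuation.restrict_lt_iff] using Valued.isOpen_ball K⸨X⸩ (Valued.v.restrict y)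
  filter_upwards [hball.mem_nhds (by simp [y, valuation_single_zpow])] with f hf
  have hfD : Valued.v f ≤ WithZero.exp (-(D : ℤ)) := (valuation_X_pow K D ▸ hf).le
  obtain ⟨ψ, rfl⟩ := (val_le_one_iff_eq_coe K f).1 <| hfD.trans <| by
    rw [← WithZero.exp_zero, WithZero.exp_le_exp]; omega
  exact ⟨ψ, X_pow_dvd_iff.2 ((intValuation_le_iff_coeff_lt_eq_zero K ψ).1 hfD), rfl⟩

variable (K) in
noncomputable def logDerivCoeff (n : ℕ) : K⸨X⸩ˣ →* Multiplicative K :=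
  (AddMonoidHom.toMultiplicative (coeff n).toAddMonoidHom).comp
    ((PowerSeries.derivative K).logDerivHom.comp (Units.map (powerSeriesPartHom K)))

lemma toAdd_logDerivCoeff_of_val_eq_coe {n : ℕ} {g : K⸨X⸩ˣ} {φ : K⟦X⟧}
    (hφ : constantCoeff φ ≠ 0) (hg : (g : K⸨X⸩) = φ) :
    (logDerivCoeff K n g).toAdd = coeff n (PowerSeries.derivative K φ * φ⁻¹) := by
  have hpart : (Units.map (powerSeriesPartHom K) g : K⟦X⟧) = φ := by
    simp [powerSeriesPartHom, hg, powerSeriesPart_ofPowerSeries hφ]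
  have hinv : (↑(Units.map (powerSeriesPartHom K) g)⁻¹ : K⟦X⟧) = φ⁻¹ :=
    Units.inv_eq_of_mul_eq_one_right (by rw [hpart, PowerSeries.mul_inv_cancel φ hφ])
  change coeff n (PowerSeries.derivative K _ * _) = _
  rw [hinv, hpart]

lemma eventually_logDerivCoeff_eq_one (n : ℕ) :
    ∀ᶠ g in 𝓝 (1 : K⸨X⸩ˣ), logDerivCoeff K n g = 1 := by
  have hcont : Tendsto (fun g : K⸨X⸩ˣ ↦ (g : K⸨X⸩) - 1) (𝓝 1) (𝓝 0) :=
    tendsto_sub_nhds_zero_iff.2 (Units.continuous_val.tendsto' 1 1 Units.val_one)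
  filter_upwards [hcont.eventually (eventually_nhds_zero_exists_X_pow_dvd (n + 2))]
    with g ⟨ψ, hψ, hg⟩
  have hconst : constantCoeff (1 + ψ) ≠ 0 := by
    rw [map_add, map_one, ← coeff_zero_eq_constantCoeff_apply, X_pow_dvd_iff.1 hψ 0 (by omega),
      add_zero]
    exact one_ne_zero
  rw [← toAdd_eq_zero, toAdd_logDerivCoeff_of_val_eq_coe hconst (by simp [hg])]
  refine X_pow_dvd_iff.1 (dvd_mul_of_dvd_left ?_ _) n n.lt_succ_self
  simpa using X_pow_dvd_derivative hψ

variable (K) in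
noncomputable def oneAddXPowUnit (m : ℕ) : K⸨X⸩ˣ :=
  Units.mk0 ((1 + X ^ (m + 1) : K⟦X⟧) : K⸨X⸩) <|
    (map_ne_zero_iff _ HahnSeries.ofPowerSeries_injective).2 fun h ↦ by
      simpa using congrArg constantCoeff h

lemma tendsto_oneAddXPowUnit : Tendsto (oneAddXPowUnit K) atTop (𝓝 1) := by
  have hX : Valued.v ((X : K⟦X⟧) : K⸨X⸩) < 1 := by
    rw [← pow_one ((X : K⟦X⟧) : K⸨X⸩), valuation_X_pow, ← WithZero.exp_zero, WithZero.exp_lt_exp]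
    omega
  rw [Units.isEmbedding_val₀.isInducing.tendsto_nhds_iff]
  simpa [Function.comp_def, oneAddXPowUnit] using
    ((Valued.tendsto_zero_pow_of_v_lt_one hX).comp (tendsto_add_atTop_nat 1)).const_add 1

lemma toAdd_logDerivCoeff_oneAddXPowUnit {n m : ℕ} (h : n ≤ m) :
    (logDerivCoeff K n (oneAddXPowUnit K m)).toAdd = if n = m then (m + 1 : K) else 0 := by
  have hconst : constantCoeff (1 + X ^ (m + 1) : K⟦X⟧) = 1 := by simp
  rw [toAdd_logDerivCoeff_of_val_eq_coe (by simp [hconst]) rfl]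
  have hderiv : PowerSeries.derivative K (1 + X ^ (m + 1)) = X ^ m * C (m + 1 : K) := by
    simp [Derivation.leibniz_pow, mul_comm]
  rw [hderiv, mul_assoc, coeff_X_pow_mul']
  by_cases hnm : n = m
  · simp [hnm, hconst]
  · rw [if_neg (by omega), if_neg hnm]

end LaurentSeries

noncomputable section CharacterExtension

variable {k G ι : Type*} [Field k] [Group G] (χ : ι → G →* Multiplicative k)

def charPairing (g : G) : (ι →₀ k) →ₗ[k] k :=
  Finsupp.linearCombination k fun i ↦ (χ i g).toAdd

lemma charPairing_apply (g : G) (x : ι →₀ k) :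
    charPairing χ g x = x.sum fun i c ↦ c * (χ i g).toAdd := by
  simp [charPairing, Finsupp.linearCombination_apply]

lemma charPairing_mul (g h : G) : charPairing χ (g * h) = charPairing χ g + charPairing χ h := by
  ext i
  simp [charPairing]

lemma charPairing_one : charPairing χ 1 = 0 := by
  ext i
  simp [charPairing]

def extensionRep : Representation k G (k × (ι →₀ k)) where
  toFun g :=
    LinearMap.id + (LinearMap.inl k k _).comp ((charPairing χ g).comp (LinearMap.snd k k _))
  map_one' := by ext <;> simp [charPairing_one]
  map_mul' g h := by ext <;> simp [charPairing_mul, add_comm]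

lemma extensionRep_apply (g : G) (v : k × (ι →₀ k)) :
    extensionRep χ g v = (v.1 + charPairing χ g v.2, v.2) := by
  ext <;> simp [extensionRep]

lemma extensionRep_apply_eq_self_iff {g : G} {v : k × (ι →₀ k)} :
    extensionRep χ g v = v ↔ charPairing χ g v.2 = 0 := by
  simp [extensionRep_apply, Prod.ext_iff]

lemma isSmoothRep_extensionRep [TopologicalSpace G] [IsTopologicalGroup G]
    (hχ : ∀ i, ∀ᶠ g in 𝓝 1, χ i g = 1) : IsSmoothRep (extensionRep χ) := by
  intro v
  let stab : Subgroup G := (MonoidHom.mk' (fun g ↦ Multiplicative.ofAdd (charPairing χ g v.2))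
    fun g h ↦ by simp [charPairing_mul]).ker
  have hstab : (stab : Set G) = {g | extensionRep χ g v = v} := by
    ext g
    simp [stab, extensionRep_apply_eq_self_iff]
  rw [← hstab]
  refine stab.isOpen_of_mem_nhds (g := 1) ?_
  filter_upwards [(Finset.eventually_all v.2.support).2 fun i _ ↦ hχ i] with g hg
  simp +contextual [stab, charPairing_apply, Finsupp.sum, hg]

lemma support_lt_of_forall_charPairing_eq_zero {χ : ℕ → G →* Multiplicative k} {u : ℕ → G}
    (hdiag : ∀ i, χ i (u i) ≠ 1) (hlow : ∀ i j, j < i → χ j (u i) = 1) {N : ℕ} {x : ℕ →₀ k}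
    (hx : ∀ i, N ≤ i → charPairing χ (u i) x = 0) : ∀ i ∈ x.support, i < N := by
  by_contra! hbig
  obtain ⟨i, hi, hNi⟩ := hbig
  have hne : x.support.Nonempty := ⟨i, hi⟩
  set m := x.support.max' hne
  have hm : m ∈ x.support := x.support.max'_mem hne
  have hpair : charPairing χ (u m) x = x m * (χ m (u m)).toAdd := by
    rw [charPairing_apply, Finsupp.sum, Finset.sum_eq_single_of_mem m hm]
    intro j hj hjm
    rw [hlow m j (lt_of_le_of_ne (x.support.le_max' j hj) hjm), toAdd_one, mul_zero]
  have := hx m (hNi.trans (x.support.le_max' i hi))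
  rw [hpair, mul_eq_zero] at this
  exact this.elim (Finsupp.mem_support_iff.1 hm) (hdiag m ∘ toAdd_eq_zero.1)

lemma finiteDimensional_fixedBy_extensionRep [TopologicalSpace G]
    {χ : ℕ → G →* Multiplicative k} {u : ℕ → G} (hu : Tendsto u atTop (𝓝 1))
    (hdiag : ∀ i, χ i (u i) ≠ 1)
    (hlow : ∀ i j, j < i → χ j (u i) = 1) (J : Subgroup G) (hJ : IsOpen (J : Set G)) :
    FiniteDimensional k (fixedBy (extensionRep χ) J) := by
  obtain ⟨N, hN⟩ := eventually_atTop.1 (hu (hJ.mem_nhds J.one_mem))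
  let supp := Finsupp.supported k k (Finset.range N : Set ℕ)
  have : FiniteDimensional k supp := Module.Finite.equiv (Finsupp.supportedEquivFinsupp _).symm
  refine Submodule.finiteDimensional_of_le
    (S₂ := LinearMap.range (LinearMap.inl k k _) ⊔ supp.map (LinearMap.inr k k _)) ?_
  intro v hv
  have hsupp : v.2 ∈ supp := fun i hi ↦ Finset.mem_range.2 <|
    support_lt_of_forall_charPairing_eq_zero hdiag hlow
      (fun i hi ↦ (extensionRep_apply_eq_self_iff χ).1 (hv _ (hN i hi))) i hi
  rw [← Prod.fst_add_snd v]
  exact Submodule.add_mem_sup (LinearMap.mem_range_self _ _) (Submodule.mem_map_of_mem hsupp)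

lemma isStableRep_ker_snd :
    IsStableRep (extensionRep χ) (LinearMap.ker (LinearMap.snd k k (ι →₀ k))) := by
  intro g v hv
  simpa [extensionRep_apply] using hv

lemma quotRep_extensionRep_apply (g : G)
    (y : (k × (ι →₀ k)) ⧸ LinearMap.ker (LinearMap.snd k k (ι →₀ k))) :
    quotRep (extensionRep χ) _ (isStableRep_ker_snd χ) g y = y := by
  obtain ⟨v, rfl⟩ := Submodule.Quotient.mk_surjective _ y
  refine (Submodule.Quotient.eq _).2 ?_
  simp [extensionRep_apply]

lemma not_isAdmissibleRep_quotRep_extensionRep [TopologicalSpace G] [Infinite ι] :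
    ¬ IsAdmissibleRep (quotRep (extensionRep χ) _ (isStableRep_ker_snd χ)) := by
  rintro ⟨-, hadm⟩
  have hfixed :
      fixedBy (quotRep (extensionRep χ) _ (isStableRep_ker_snd χ)) (⊤ : Subgroup G) = ⊤ :=
    eq_top_iff.2 fun y _ g _ ↦ quotRep_extensionRep_apply χ g y
  have := hadm ⊤ isOpen_univ
  rw [hfixed] at this
  have : FiniteDimensional k (ι →₀ k) := Module.Finite.equiv <| Submodule.topEquiv.trans <|
    LinearMap.quotKerEquivOfSurjective (LinearMap.snd k k (ι →₀ k)) LinearMap.snd_surjective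
  have := Module.Finite.finite_basis (Finsupp.basisSingleOne (R := k) (ι := ι))
  exact not_finite ι

end CharacterExtension

section Counterexample

open LaurentSeries

variable (p : ℕ) [Fact p.Prime] (k : Type*) [Field k] [CharP k p]

/-- The degree `p * j` makes `χⱼ (1 + X ^ (p * j + 1)) = p * j + 1 = 1`. -/
noncomputable def laurentCharacter (j : ℕ) : (LaurentSeries (ZMod p))ˣ →* Multiplicative k :=
  (AddMonoidHom.toMultiplicative (ZMod.castHom (dvd_refl p) k).toAddMonoidHom).comp
    (logDerivCoeff (ZMod p) (p * j))

lemma eventually_laurentCharacter_eq_one (j : ℕ) :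
    ∀ᶠ g in 𝓝 1, laurentCharacter p k j g = 1 := by
  filter_upwards [eventually_logDerivCoeff_eq_one (p * j)] with g hg
  simp [laurentCharacter, hg]

lemma laurentCharacter_oneAddXPowUnit_ne_one (i : ℕ) :
    laurentCharacter p k i (oneAddXPowUnit (ZMod p) (p * i)) ≠ 1 := by
  rw [Ne, ← toAdd_eq_zero]
  simp [laurentCharacter, toAdd_logDerivCoeff_oneAddXPowUnit le_rfl]

lemma laurentCharacter_oneAddXPowUnit_of_lt {i j : ℕ} (h : j < i) :
    laurentCharacter p k j (oneAddXPowUnit (ZMod p) (p * i)) = 1 := by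
  have hp := (Fact.out : p.Prime).pos
  have hji : p * j < p * i := Nat.mul_lt_mul_of_pos_left h hp
  rw [← toAdd_eq_zero]
  simp [laurentCharacter, toAdd_logDerivCoeff_oneAddXPowUnit hji.le, hji.ne]

end Counterexample

theorem statement11_general (p : ℕ) [Fact p.Prime]
    (k : Type) [Field k] [CharP k p] :
    ∃ (V : Type) (_ : AddCommGroup V) (_ : Module k V)
      (ρ : Representation k (LaurentSeries (ZMod p))ˣ V),
      IsSmoothRep ρ ∧ IsAdmissibleRep ρ ∧
        ∃ (W : Submodule k V) (h : IsStableRep ρ W),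
          ¬ IsAdmissibleRep (quotRep ρ W h) := by
  have hsmooth := isSmoothRep_extensionRep _ (eventually_laurentCharacter_eq_one p k)
  have htendsto : Tendsto (fun i ↦ LaurentSeries.oneAddXPowUnit (ZMod p) (p * i)) atTop (𝓝 1) :=
    LaurentSeries.tendsto_oneAddXPowUnit.comp <|
      tendsto_id.const_mul_atTop' (Fact.out : p.Prime).pos
  exact ⟨k × (ℕ →₀ k), inferInstance, inferInstance, extensionRep (laurentCharacter p k), hsmooth,
    ⟨hsmooth, finiteDimensional_fixedBy_extensionRep htendsto
      (laurentCharacter_oneAddXPowUnit_ne_one p k)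
      (fun _ _ ↦ laurentCharacter_oneAddXPowUnit_of_lt p k)⟩,
    _, isStableRep_ker_snd _, not_isAdmissibleRep_quotRep_extensionRep _⟩

/-- for `F = 𝔽_p((T))` with its valuation topology and `G = Fˣ`, over an
algebraically closed field `k` of characteristic `p`, there is an admissible smooth
representation of `G` with a stable subspace such that the quotient representation is
not admissible. -/
theorem statement11 (p : ℕ) [Fact p.Prime]
    (k : Type) [Field k] [IsAlgClosed k] [CharP k p] :
    ∃ (V : Type) (_ : AddCommGroup V) (_ : Module k V)
      (ρ : Representation k (LaurentSeries (ZMod p))ˣ V),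
      IsSmoothRep ρ ∧ IsAdmissibleRep ρ ∧
        ∃ (W : Submodule k V) (h : IsStableRep ρ W),
          ¬ IsAdmissibleRep (quotRep ρ W h) :=
  statement11_general p k
end
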